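/- arXiv:1708.01090 — 3 statements merged into one kernel-verified Lean document; each statement's English description precedes it below -/
import Mathlib

section
/- Suppose D is a closed subset of [0,1]² whose interior D° is nonempty and connected and which satisfies D = closure(D°). Then either ent(D) = 0 or ent(D) = ∞. -/
open Set Filter Topology unitInterval
open scoped Classical

noncomputable section

/-- The shift map on sequences in the unit interval. -/
def shiftMap (x : ℕ → unitInterval) : ℕ → unitInterval := fun n => x (n + 1)

/-- The `m`-fold Mahavier product `⋆_{i=1}^m G` of a set `G ⊆ [0,1]²`. -/
def MahavierFin (G : Set (unitInterval × unitInterval)) (m : ℕ) :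
    Set (Fin (m + 1) → unitInterval) :=
  {x | ∀ i : Fin m, (x i.castSucc, x i.succ) ∈ G}

/-- The infinite Mahavier product `⋆_{i=1}^∞ G` of a set `G ⊆ [0,1]²`. -/
def MahavierInf (G : Set (unitInterval × unitInterval)) : Set (ℕ → unitInterval) :=
  {x | ∀ i : ℕ, (x i, x (i + 1)) ∈ G}

/-- The `m`-fold Mahavier product of `H ⊆ [0,1]^{N+1}`, a subset of `[0,1]^{mN+1}`. -/
def MahavierFinN (N : ℕ) (H : Set (Fin (N + 1) → unitInterval)) (m : ℕ) :
    Set (Fin (m * N + 1) → unitInterval) :=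
  {x | ∀ j : Fin m, (fun i : Fin (N + 1) =>
      x ⟨j.1 * N + i.1, by
        have hi : i.1 ≤ N := Nat.lt_succ_iff.mp i.2
        have hj : j.1 + 1 ≤ m := j.2
        have h : (j.1 + 1) * N ≤ m * N := Nat.mul_le_mul_right N hj
        have h2 : (j.1 + 1) * N = j.1 * N + N := by ring
        omega⟩) ∈ H}

/-- The infinite Mahavier product of `H ⊆ [0,1]^{N+1}`. -/
def MahavierInfN (N : ℕ) (H : Set (Fin (N + 1) → unitInterval)) :
    Set (ℕ → unitInterval) :=
  {x | ∀ j : ℕ, (fun i : Fin (N + 1) => x (j * N + i.1)) ∈ H}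

/-- The least cardinality of a subcollection of `U` covering `K`. -/
def coverNum {X : Type*} (K : Set X) (U : Set (Set X)) : ℕ :=
  sInf {n | ∃ F : Finset (Set X), ↑F ⊆ U ∧ F.card = n ∧ K ⊆ ⋃₀ ↑F}

/-- `α` is a minimal finite cover of `[0,1]` by open intervals: every member is open in
`[0,1]` and order-connected (an interval), `α` covers `[0,1]`, and no proper
subcollection of `α` covers `[0,1]`. -/
def IsMinimalIntervalCover (α : Finset (Set unitInterval)) : Prop :=
  (∀ u ∈ α, IsOpen u ∧ u.OrdConnected) ∧
  (⋃₀ (α : Set (Set unitInterval)) = Set.univ) ∧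
  ∀ β : Finset (Set unitInterval), β ⊆ α →
    ⋃₀ (β : Set (Set unitInterval)) = Set.univ → β = α

/-- The grid cover `α^k` of `[0,1]^k`: all products of `k` members of `α`. -/
def gridCover (α : Finset (Set unitInterval)) (k : ℕ) :
    Set (Set (Fin k → unitInterval)) :=
  {s | ∃ f : Fin k → Set unitInterval, (∀ i, f i ∈ α) ∧ s = {x | ∀ i, x i ∈ f i}}

/-- Entropy of `G ⊆ [0,1]²` relative to the cover `α`: the limit (realized as a `limsup`)
of `(1/m) log N(⋆_{i=1}^m G, α^{m+1})` if `⋆_{i=1}^∞ G ≠ ∅`, and `0` otherwise. -/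
def entOf (G : Set (unitInterval × unitInterval))
    (α : Finset (Set unitInterval)) : ENNReal :=
  if (MahavierInf G).Nonempty then
    Filter.limsup (fun m : ℕ =>
      ENNReal.ofReal
        (Real.log (coverNum (MahavierFin G m) (gridCover α (m + 1))) / m))
      Filter.atTop
  else 0

/-- Topological entropy of `G ⊆ [0,1]²`: the supremum of `entOf G α` over all minimal
open interval covers `α` of `[0,1]`. -/
def ent (G : Set (unitInterval × unitInterval)) : ENNReal :=
  ⨆ α : {α : Finset (Set unitInterval) // IsMinimalIntervalCover α}, entOf G α.1

/-- Entropy of `H ⊆ [0,1]^{N+1}` relative to the cover `α`. -/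
def entOfN (N : ℕ) (H : Set (Fin (N + 1) → unitInterval))
    (α : Finset (Set unitInterval)) : ENNReal :=
  if (MahavierInfN N H).Nonempty then
    Filter.limsup (fun m : ℕ =>
      ENNReal.ofReal
        (Real.log (coverNum (MahavierFinN N H m) (gridCover α (m * N + 1))) / m))
      Filter.atTop
  else 0

/-- Topological entropy of `H ⊆ [0,1]^{N+1}`. -/
def entN (N : ℕ) (H : Set (Fin (N + 1) → unitInterval)) : ENNReal :=
  ⨆ α : {α : Finset (Set unitInterval) // IsMinimalIntervalCover α}, entOfN N H α.1

/-- An open cover of a topological space. -/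
def IsOpenCover {X : Type*} [TopologicalSpace X] (U : Set (Set X)) : Prop :=
  (∀ u ∈ U, IsOpen u) ∧ ⋃₀ U = Set.univ

/-- The join `U ∨ T⁻¹U ∨ ⋯ ∨ T⁻ⁿU` of the open cover `U` under the map `T`. -/
def dynJoin {X : Type*} (T : X → X) (U : Set (Set X)) (n : ℕ) : Set (Set X) :=
  {s | ∃ f : Fin (n + 1) → Set X, (∀ i, f i ∈ U) ∧ s = ⋂ i, T^[i.1] ⁻¹' f i}

/-- The Adler–Konheim–McAndrew topological entropy of `T : X → X`: the supremum over all
open covers `U` of `X` of `lim (1/n) log N(X, U ∨ T⁻¹U ∨ ⋯ ∨ T⁻ⁿU)` (as a `limsup`). -/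
def akmEntropy {X : Type*} [TopologicalSpace X] (T : X → X) : ENNReal :=
  ⨆ U : {U : Set (Set X) // IsOpenCover U},
    Filter.limsup (fun n : ℕ =>
      ENNReal.ofReal (Real.log (coverNum Set.univ (dynJoin T U.1 n)) / n))
      Filter.atTop

/-!
If the interior of `D` meets the diagonal, `D` contains a square `J × J` about a diagonal point.
Any `n` points of `J` are separated by a fine enough uniform cover `α`, and all `n ^ (m + 1)`
sequences of them lie in the `m`-fold Mahavier product, so `ent(D, α) ≥ log n` for every `n`.

Otherwise, the connected interior lies strictly on one side of the diagonal, so its closure `D`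
lies weakly on one side and every point of a Mahavier product of `D` is a monotone (or antitone)
tuple. Ordering the members of a minimal interval cover `α` by points that lie in no other member,
a monotone tuple lies in the box of a monotone word in the members of `α`; there are at most
`(m + 2) ^ |α|` such words, and this polynomial growth gives `ent(D, α) = 0`.
-/

theorem Finset.exists_pos_le_dist {X : Type*} [MetricSpace X] (S : Finset X) :
    ∃ δ > 0, ∀ x ∈ S, ∀ y ∈ S, x ≠ y → δ ≤ dist x y := by
  by_cases hS : (S : Set X).Nontrivial
  · exact ⟨_, S.infsep_pos_iff_nontrivial.2 hS, fun x hx y hy => Set.infsep_le_dist_of_mem hx hy⟩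
  · exact ⟨1, one_pos, fun x hx y hy hxy => (hxy (Set.not_nontrivial_iff.1 hS hx hy)).elim⟩

/-- A monotone word is determined by how many of its letters lie below each value. -/
theorem card_le_of_monotone_comp {ι β γ : Type*} [Fintype ι] [LinearOrder ι] [Fintype β]
    [LinearOrder γ] {p : β → γ} (hp : Function.Injective p) (W : Finset (ι → β))
    (hW : ∀ w ∈ W, Monotone (p ∘ w)) :
    W.card ≤ (Fintype.card ι + 1) ^ Fintype.card β := by
  let below (w : ι → β) (b : β) : Finset ι := Finset.univ.filter fun i => p (w i) ≤ p b
  have hlower : ∀ w ∈ W, ∀ b, IsLowerSet (below w b : Set ι) := fun w hw b => by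
    rw [Finset.coe_filter_univ]
    exact (isLowerSet_Iic (p b)).preimage (hW w hw)
  have hle : ∀ w ∈ W, ∀ v ∈ W, (∀ b, (below w b).card = (below v b).card) →
      ∀ i, p (w i) ≤ p (v i) := by
    intro w hw v hv hcard i
    have hi : i ∈ below v (v i) := by simp [below]
    suffices below v (v i) ⊆ below w (v i) by simpa [below] using this hi
    rcases (hlower w hw (v i)).total (hlower v hv (v i)) with h | h
    · exact (Finset.eq_of_subset_of_card_le (Finset.coe_subset.1 h)
        (hcard (v i)).ge).ge
    · exact Finset.coe_subset.1 h
  let count (w : ι → β) (b : β) : Fin (Fintype.card ι + 1) :=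
    ⟨(below w b).card, Nat.lt_succ_of_le (Finset.card_le_univ _)⟩
  calc W.card ≤ Fintype.card (β → Fin (Fintype.card ι + 1)) :=
        Finset.card_le_card_of_injOn count (fun _ _ => Finset.mem_coe.2 (Finset.mem_univ _))
          fun w hw v hv hwv => by
            have hcard b : (below w b).card = (below v b).card :=
              congrArg Fin.val (congrFun hwv b)
            funext i
            exact hp ((hle w hw v hv hcard i).antisymm
              (hle v hv w hw (fun b => (hcard b).symm) i))
    _ = (Fintype.card ι + 1) ^ Fintype.card β := by simp

theorem coverNum_le_card {X : Type*} {K : Set X} {U : Set (Set X)} {F : Finset (Set X)}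
    (hFU : ↑F ⊆ U) (hFK : K ⊆ ⋃₀ ↑F) : coverNum K U ≤ F.card :=
  Nat.sInf_le ⟨F, hFU, rfl, hFK⟩

theorem card_le_coverNum {X : Type*} {K : Set X} {U : Set (Set X)}
    (hU : ∃ F : Finset (Set X), ↑F ⊆ U ∧ K ⊆ ⋃₀ ↑F) {P : Finset X} (hPK : ↑P ⊆ K)
    (hP : ∀ u ∈ U, (↑P ∩ u).Subsingleton) : P.card ≤ coverNum K U := by
  obtain ⟨F₀, hF₀U, hF₀K⟩ := hU
  refine le_csInf ⟨_, F₀, hF₀U, rfl, hF₀K⟩ ?_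
  rintro _ ⟨F, hFU, rfl, hFK⟩
  refine Finset.card_le_card_of_forall_subsingleton (· ∈ ·) (fun x hx => hFK (hPK hx)) ?_
  exact fun u hu => (hP u (hFU hu)).anti fun x hx => hx

namespace IsMinimalIntervalCover

variable {α : Finset (Set unitInterval)}

theorem exists_private_point (hα : IsMinimalIntervalCover α) {u : Set unitInterval}
    (hu : u ∈ α) : ∃ p ∈ u, ∀ v ∈ α, p ∈ v → v = u := by
  obtain ⟨p, hp⟩ : ∃ p, p ∉ ⋃₀ (↑(α.erase u) : Set (Set unitInterval)) := by
    by_contra! h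
    refine Finset.notMem_erase u α ?_
    rwa [hα.2.2 _ (Finset.erase_subset u α) (Set.eq_univ_of_forall h)]
  have hother : ∀ v ∈ α, p ∈ v → v = u := fun v hv hpv =>
    by_contra fun hvu => hp ⟨v, Finset.mem_erase.2 ⟨hvu, hv⟩, hpv⟩
  obtain ⟨v, hv, hpv⟩ := Set.mem_sUnion.1 (hα.2.1.symm ▸ Set.mem_univ p)
  exact ⟨p, hother v hv hpv ▸ hpv, hother⟩

/-- Members are ordered by their private points; selecting for each `x` the last member
containing it is monotone because members are intervals. -/
theorem exists_monotone_selection (hα : IsMinimalIntervalCover α) :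
    ∃ (p : α → unitInterval) (sel : unitInterval → α),
      Function.Injective p ∧ (∀ x, x ∈ (sel x).1) ∧ Monotone (p ∘ sel) := by
  choose p hpu hpriv using fun u : α => hα.exists_private_point u.2
  have hsel : ∀ x, ∃ u : α, x ∈ u.1 ∧ ∀ v : α, x ∈ v.1 → p v ≤ p u := by
    intro x
    obtain ⟨w, hw, hxw⟩ := Set.mem_sUnion.1 (hα.2.1.symm ▸ Set.mem_univ x)
    obtain ⟨u, hu, hmax⟩ := (Finset.univ.filter fun u : α => x ∈ u.1).exists_max_image p
      ⟨⟨w, hw⟩, by simpa using hxw⟩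
    exact ⟨u, (Finset.mem_filter.1 hu).2, fun v hv => hmax v (by simpa using hv)⟩
  choose sel hxsel hselmax using hsel
  refine ⟨p, sel, fun u v h => Subtype.ext (hpriv v u.1 u.2 (h ▸ hpu u)), hxsel,
    fun x y hxy => ?_⟩
  by_contra! hlt
  have hint : ∀ u : α, u.1.OrdConnected := fun u => (hα.1 u.1 u.2).2
  rcases le_total y (p (sel x)) with hy | hy
  · exact hlt.not_ge (hselmax y (sel x) ((hint _).out (hxsel x) (hpu _) ⟨hxy, hy⟩))
  · have hyx : sel y = sel x := Subtype.ext <|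
      hpriv (sel x) _ (sel y).2 ((hint _).out (hpu _) (hxsel y) ⟨hlt.le, hy⟩)
    exact hlt.ne (congrArg p hyx)

theorem exists_subcover_card_le {k : ℕ} {K : Set (Fin k → unitInterval)}
    {sel : unitInterval → α} (hsel : ∀ x, x ∈ (sel x).1) {W : Finset (Fin k → α)}
    (hW : ∀ x ∈ K, sel ∘ x ∈ W) :
    ∃ F : Finset (Set (Fin k → unitInterval)),
      ↑F ⊆ gridCover α k ∧ F.card ≤ W.card ∧ K ⊆ ⋃₀ ↑F := by
  refine ⟨W.image fun w => {x | ∀ i, x i ∈ (w i).1}, ?_, Finset.card_image_le, ?_⟩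
  · rintro _ hs
    obtain ⟨w, -, rfl⟩ := Finset.mem_image.1 hs
    exact ⟨fun i => (w i).1, fun i => (w i).2, rfl⟩
  · intro x hx
    exact ⟨_, Finset.mem_image_of_mem _ (hW x hx), fun i => hsel (x i)⟩

theorem exists_gridCover_subcover (hα : IsMinimalIntervalCover α) {k : ℕ}
    (K : Set (Fin k → unitInterval)) :
    ∃ F : Finset (Set (Fin k → unitInterval)), ↑F ⊆ gridCover α k ∧ K ⊆ ⋃₀ ↑F := by
  obtain ⟨-, sel, -, hsel, -⟩ := hα.exists_monotone_selection
  obtain ⟨F, hFU, -, hFK⟩ :=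
    exists_subcover_card_le (K := K) (W := Finset.univ) hsel fun _ _ => Finset.mem_univ _
  exact ⟨F, hFU, hFK⟩

theorem coverNum_le_of_monotone_or_antitone (hα : IsMinimalIntervalCover α) {m : ℕ}
    {K : Set (Fin (m + 1) → unitInterval)}
    (hK : (∀ x ∈ K, Monotone x) ∨ ∀ x ∈ K, Antitone x) :
    coverNum K (gridCover α (m + 1)) ≤ (m + 2) ^ α.card := by
  obtain ⟨p, sel, hp, hsel, hmono⟩ := hα.exists_monotone_selection
  suffices ∃ W : Finset (Fin (m + 1) → α), (∀ x ∈ K, sel ∘ x ∈ W) ∧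
      W.card ≤ (m + 2) ^ α.card by
    obtain ⟨W, hW, hWcard⟩ := this
    obtain ⟨F, hFU, hFcard, hFK⟩ := exists_subcover_card_le hsel hW
    exact (coverNum_le_card hFU hFK).trans (hFcard.trans hWcard)
  rcases hK with hK | hK
  · refine ⟨Finset.univ.filter fun w => Monotone (p ∘ w),
      fun x hx => Finset.mem_filter.2 ⟨Finset.mem_univ _, hmono.comp (hK x hx)⟩, ?_⟩
    exact (card_le_of_monotone_comp hp _ fun w hw => (Finset.mem_filter.1 hw).2).trans_eq
      (by simp)
  · refine ⟨Finset.univ.filter fun w => Antitone (p ∘ w),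
      fun x hx => Finset.mem_filter.2 ⟨Finset.mem_univ _, hmono.comp_antitone (hK x hx)⟩, ?_⟩
    exact (card_le_of_monotone_comp (γ := unitIntervalᵒᵈ) (p := OrderDual.toDual ∘ p) hp _
      fun w hw => monotone_toDual_comp_iff.2 (Finset.mem_filter.1 hw).2).trans_eq (by simp)

end IsMinimalIntervalCover

theorem monotone_of_mem_mahavierFin {G : Set (unitInterval × unitInterval)}
    (hG : ∀ q ∈ G, q.1 ≤ q.2) {m : ℕ} {x : Fin (m + 1) → unitInterval}
    (hx : x ∈ MahavierFin G m) : Monotone x :=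
  Fin.monotone_iff_le_succ.2 fun i => hG _ (hx i)

theorem antitone_of_mem_mahavierFin {G : Set (unitInterval × unitInterval)}
    (hG : ∀ q ∈ G, q.2 ≤ q.1) {m : ℕ} {x : Fin (m + 1) → unitInterval}
    (hx : x ∈ MahavierFin G m) : Antitone x :=
  Fin.antitone_iff_succ_le.2 fun i => hG _ (hx i)

theorem tendsto_log_add_two_div_atTop :
    Tendsto (fun m : ℕ => Real.log ((m : ℝ) + 2) / m) atTop (𝓝 0) := by
  have := (Real.tendsto_pow_log_div_mul_add_atTop 1 (-2) 1 one_ne_zero).comp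
    (tendsto_natCast_atTop_atTop.atTop_add (tendsto_const_nhds (x := (2 : ℝ))))
  simpa [Function.comp_def] using this

theorem entOf_eq_zero_of_coverNum_le {G : Set (unitInterval × unitInterval)}
    {α : Finset (Set unitInterval)} (c : ℕ)
    (h : ∀ m, coverNum (MahavierFin G m) (gridCover α (m + 1)) ≤ (m + 2) ^ c) :
    entOf G α = 0 := by
  unfold entOf
  split_ifs
  · refine Tendsto.limsup_eq ?_
    rw [← ENNReal.ofReal_zero]
    refine ENNReal.tendsto_ofReal (squeeze_zero (fun m => ?_) (fun m => ?_)
      (by simpa using tendsto_log_add_two_div_atTop.const_mul (c : ℝ)))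
    · exact div_nonneg (Real.log_natCast_nonneg _) m.cast_nonneg
    · rw [mul_div_assoc', ← Real.log_pow]
      refine div_le_div_of_nonneg_right ?_ m.cast_nonneg
      rcases Nat.eq_zero_or_pos (coverNum (MahavierFin G m) (gridCover α (m + 1))) with h0 | h0
      · rw [h0, Nat.cast_zero, Real.log_zero]
        exact Real.log_nonneg (one_le_pow₀ (by linarith))
      · exact Real.log_le_log (by exact_mod_cast h0) (by exact_mod_cast h m)
  · rfl

theorem ent_eq_zero_of_forall_le_or_forall_ge {G : Set (unitInterval × unitInterval)}
    (hG : (∀ q ∈ G, q.1 ≤ q.2) ∨ ∀ q ∈ G, q.2 ≤ q.1) : ent G = 0 :=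
  ENNReal.iSup_eq_zero.2 fun α => entOf_eq_zero_of_coverNum_le α.1.card fun _ =>
    α.2.coverNum_le_of_monotone_or_antitone <|
      hG.imp (fun h _ => monotone_of_mem_mahavierFin h) fun h _ => antitone_of_mem_mahavierFin h

theorem ofReal_log_card_le_entOf {G : Set (unitInterval × unitInterval)}
    {α : Finset (Set unitInterval)} (hα : IsMinimalIntervalCover α) {S : Finset unitInterval}
    (hSG : ∀ x ∈ S, ∀ y ∈ S, (x, y) ∈ G) (hS : ∀ u ∈ α, (↑S ∩ u).Subsingleton) :
    ENNReal.ofReal (Real.log S.card) ≤ entOf G α := by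
  rcases S.eq_empty_or_nonempty with rfl | ⟨s, hs⟩
  · simp
  have hcard : ∀ m, S.card ^ (m + 1) ≤ coverNum (MahavierFin G m) (gridCover α (m + 1)) := by
    intro m
    rw [← Fintype.card_piFinset_const]
    refine card_le_coverNum (hα.exists_gridCover_subcover _)
      (fun x hx i => hSG _ (Fintype.mem_piFinset.1 hx _) _ (Fintype.mem_piFinset.1 hx _)) ?_
    rintro _ ⟨f, hf, rfl⟩ x ⟨hxS, hxf⟩ y ⟨hyS, hyf⟩
    funext i
    exact hS _ (hf i) ⟨Fintype.mem_piFinset.1 hxS i, hxf i⟩ ⟨Fintype.mem_piFinset.1 hyS i, hyf i⟩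
  rw [entOf, if_pos ⟨fun _ => s, fun _ => hSG s hs s hs⟩]
  refine le_limsup_of_frequently_le' (Eventually.frequently ?_)
  filter_upwards [eventually_ge_atTop 1] with m hm
  refine ENNReal.ofReal_le_ofReal ((le_div_iff₀ (by exact_mod_cast hm)).2 ?_)
  have hlog : 0 ≤ Real.log S.card := Real.log_natCast_nonneg _
  calc Real.log S.card * m ≤ (m + 1) * Real.log S.card := by nlinarith
    _ = Real.log ((S.card ^ (m + 1) : ℕ) : ℝ) := by push_cast; rw [Real.log_pow]; push_cast; ring
    _ ≤ _ := Real.log_le_log (by exact_mod_cast pow_pos (Finset.card_pos.2 ⟨s, hs⟩) _)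
        (by exact_mod_cast hcard m)

def uniformCover (N : ℕ) : Finset (Set unitInterval) :=
  (Finset.range (N + 1)).image fun j : ℕ => Subtype.val ⁻¹' Metric.ball ((j : ℝ) / N) (1 / N)

theorem mem_ball_grid_iff {N : ℕ} (hN : (0 : ℝ) < N) (x : ℝ) (j : ℕ) :
    x ∈ Metric.ball ((j : ℝ) / N) (1 / N) ↔ |x * N - j| < 1 := by
  rw [Metric.mem_ball, Real.dist_eq, show x - j / N = (x * N - j) / N by field_simp, abs_div,
    abs_of_pos hN, div_lt_div_iff_of_pos_right hN]

theorem dist_lt_of_mem_uniformCover {N : ℕ} {u : Set unitInterval} (hu : u ∈ uniformCover N)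
    {x y : unitInterval} (hx : x ∈ u) (hy : y ∈ u) : dist x y < 2 / N := by
  obtain ⟨j, -, rfl⟩ := Finset.mem_image.1 hu
  calc dist x y = dist (x : ℝ) y := Subtype.dist_eq x y
    _ ≤ dist (x : ℝ) (j / N) + dist (y : ℝ) (j / N) := dist_triangle_right _ _ _
    _ < 1 / N + 1 / N := add_lt_add hx hy
    _ = 2 / N := by ring

theorem uniformCover_isMinimalIntervalCover {N : ℕ} (hN : 1 ≤ N) :
    IsMinimalIntervalCover (uniformCover N) := by
  have hNpos : (0 : ℝ) < N := by exact_mod_cast hN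
  have hgrid : ∀ j ≤ N, (j : ℝ) / N ∈ Icc (0 : ℝ) 1 := fun j hj =>
    ⟨by positivity, (div_le_one hNpos).2 (by exact_mod_cast hj)⟩
  refine ⟨?_, ?_, fun β hβ hcov => ?_⟩
  · intro u hu
    obtain ⟨j, -, rfl⟩ := Finset.mem_image.1 hu
    refine ⟨Metric.isOpen_ball.preimage continuous_subtype_val, ?_⟩
    rw [Real.ball_eq_Ioo]
    exact ordConnected_Ioo.preimage_mono (Subtype.mono_coe _)
  · refine eq_univ_of_forall fun x => ?_
    have hxN : (x : ℝ) * N ≤ N := mul_le_of_le_one_left hNpos.le x.2.2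
    refine ⟨_, Finset.mem_image_of_mem _ (Finset.mem_range_succ_iff.2 (Nat.floor_le_of_le hxN)),
      (mem_ball_grid_iff hNpos _ _).2 ?_⟩
    have hfloor := Nat.floor_le (mul_nonneg x.2.1 hNpos.le)
    have hfloor' := Nat.lt_floor_add_one ((x : ℝ) * N)
    rw [abs_lt]
    constructor <;> linarith
  · refine Finset.Subset.antisymm hβ fun u hu => ?_
    obtain ⟨j, hj, rfl⟩ := Finset.mem_image.1 hu
    have hjN := Finset.mem_range_succ_iff.1 hj
    obtain ⟨v, hv, hjv⟩ := Set.mem_sUnion.1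
      (hcov.symm ▸ Set.mem_univ (⟨j / N, hgrid j hjN⟩ : unitInterval))
    obtain ⟨j', -, rfl⟩ := Finset.mem_image.1 (hβ hv)
    have hjj' := (mem_ball_grid_iff hNpos _ _).1 hjv
    rw [div_mul_cancel₀ _ hNpos.ne', abs_lt] at hjj'
    have h1 : j < j' + 1 := by exact_mod_cast (by linarith : (j : ℝ) < j' + 1)
    have h2 : j' < j + 1 := by exact_mod_cast (by linarith : (j' : ℝ) < j + 1)
    obtain rfl : j' = j := by omega
    exact hv

theorem ent_eq_top_of_mem_interior {G : Set (unitInterval × unitInterval)} {c : unitInterval}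
    (hc : (c, c) ∈ interior G) : ent G = ⊤ := by
  obtain ⟨ε, hε, hball⟩ := Metric.mem_nhds_iff.1 (mem_interior_iff_mem_nhds.1 hc)
  have hsq : ∀ x ∈ Metric.ball c ε, ∀ y ∈ Metric.ball c ε, (x, y) ∈ G := fun x hx y hy =>
    hball (ball_prod_same c c ε ▸ ⟨hx, hy⟩)
  have hlog : Tendsto (fun n : ℕ => ENNReal.ofReal (Real.log n)) atTop (𝓝 ⊤) :=
    ENNReal.tendsto_ofReal_atTop.comp (Real.tendsto_log_atTop.comp tendsto_natCast_atTop_atTop)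
  refine top_le_iff.1 (le_of_tendsto' hlog fun n => ?_)
  obtain ⟨S, hSball, rfl⟩ :=
    (infinite_of_mem_nhds c (Metric.ball_mem_nhds c hε)).exists_subset_card_eq n
  obtain ⟨δ, hδ, hsep⟩ := S.exists_pos_le_dist
  obtain ⟨N, hN⟩ := exists_nat_gt (2 / δ)
  have hNpos : (0 : ℝ) < N := (div_pos two_pos hδ).trans hN
  have hmesh : 2 / (N : ℝ) < δ := (div_lt_iff₀ hNpos).2 (by rwa [div_lt_iff₀ hδ, mul_comm] at hN)
  have hα := uniformCover_isMinimalIntervalCover (N := N) (by exact_mod_cast hNpos)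
  calc ENNReal.ofReal (Real.log S.card) ≤ entOf G (uniformCover N) :=
        ofReal_log_card_le_entOf hα (fun x hx y hy => hsq x (hSball hx) y (hSball hy))
          fun u hu x ⟨hxS, hxu⟩ y ⟨hyS, hyu⟩ => by_contra fun hxy =>
            (hmesh.trans_le (hsep x hxS y hyS hxy)).not_gt
              (dist_lt_of_mem_uniformCover hu hxu hyu)
    _ ≤ ent G := le_iSup (fun α : {α // IsMinimalIntervalCover α} => entOf G α.1) ⟨_, hα⟩

theorem forall_le_or_forall_ge_of_isPreconnected_interior {X : Type*} [TopologicalSpace X]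
    [LinearOrder X] [OrderClosedTopology X] {D : Set (X × X)}
    (hconn : IsPreconnected (interior D)) (hreg : D = closure (interior D))
    (hdiag : ∀ c, (c, c) ∉ interior D) : (∀ q ∈ D, q.1 ≤ q.2) ∨ ∀ q ∈ D, q.2 ≤ q.1 := by
  have hsides : interior D ⊆ {q | q.1 < q.2} ∪ {q | q.2 < q.1} := fun q hq =>
    lt_or_gt_of_ne fun h : q.1 = q.2 =>
      hdiag q.1 (by rwa [show (q.1, q.1) = q from Prod.ext rfl h])
  rcases hconn.subset_or_subset (isOpen_lt continuous_fst continuous_snd)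
      (isOpen_lt continuous_snd continuous_fst)
      (disjoint_left.2 fun q (h : q.1 < q.2) h' => h.asymm h') hsides with h | h
  · exact Or.inl fun q hq =>
      (closure_mono h |>.trans (closure_lt_subset_le continuous_fst continuous_snd)) (hreg ▸ hq)
  · exact Or.inr fun q hq =>
      (closure_mono h |>.trans (closure_lt_subset_le continuous_snd continuous_fst)) (hreg ▸ hq)

theorem ent_closed_region_zero_or_top_general
    (D : Set (unitInterval × unitInterval))
    (hconn : IsConnected (interior D))
    (hreg : D = closure (interior D)) :
    ent D = 0 ∨ ent D = ⊤ := by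
  by_cases hdiag : ∀ c, (c, c) ∉ interior D
  · exact Or.inl (ent_eq_zero_of_forall_le_or_forall_ge
      (forall_le_or_forall_ge_of_isPreconnected_interior hconn.isPreconnected hreg hdiag))
  · obtain ⟨c, hc⟩ := not_forall_not.1 hdiag
    exact Or.inr (ent_eq_top_of_mem_interior hc)

/-- If `D ⊆ [0,1]²` is closed with nonempty connected interior and
`D = closure(interior D)`, then `ent(D)` is either `0` or `∞`. -/
theorem ent_closed_region_zero_or_top
    (D : Set (unitInterval × unitInterval)) (hDcl : IsClosed D)
    (hne : (interior D).Nonempty) (hconn : IsConnected (interior D))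
    (hreg : D = closure (interior D)) :
    ent D = 0 ∨ ent D = ⊤ :=
  ent_closed_region_zero_or_top_general D hconn hreg
end
end

section
/- Let N ≥ 1 and let H be a closed subset of [0,1]^{N+1} that contains k pairwise disjoint closed sets H_1, …, H_k such that the projection of each H_i to the first coordinate is all of [0,1] (π_0(H_i) = [0,1] for 1 ≤ i ≤ k). Then ent(H) ≥ log k. -/
open Set Filter Topology unitInterval
open scoped Classical

noncomputable section

/-!
Pick `δ > 0` such that points of different `Hs i` are at least `δ` apart, and a minimal cover
of `[0,1]` by intervals of length `< δ`. Because every `Hs i` projects onto `[0,1]`, each word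
`w : Fin m → Fin k` is realised by a point of the `m`-fold Mahavier product whose `j`-th block
lies in `Hs (w j)`: the blocks are chained by choosing each one over the last coordinate of the
previous one. Points realising different words are `δ`-apart in some block, so no cell of the
grid cover contains two of them. Hence at least `k ^ m` cells are needed, and `ent(H) ≥ log k`.
-/

open Metric Function

theorem exists_pos_forall_dist_lt_imp_eq {ι X : Type*} [Finite ι] [MetricSpace X]
    {s : ι → Set X} (hs : ∀ i, IsCompact (s i)) (hd : Pairwise (Disjoint on s)) :
    ∃ δ > 0, ∀ i j, ∀ x ∈ s i, ∀ y ∈ s j, dist x y < δ → i = j := by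
  have hpair : ∀ p : ι × ι,
      ∀ᶠ δ in 𝓝[>] (0 : ℝ), ∀ x ∈ s p.1, ∀ y ∈ s p.2, dist x y < δ → p.1 = p.2 := by
    rintro ⟨i, j⟩
    by_cases hij : i = j
    · exact Eventually.of_forall fun _ _ _ _ _ _ => hij
    obtain ⟨δ, hδ, hdδ⟩ := (hd hij).exists_thickenings (hs i) (hs j).isClosed
    filter_upwards [Ioc_mem_nhdsGT hδ] with ε hε x hx y hy hxy
    exact absurd (mem_thickening_iff.2 ⟨y, hy, hxy.trans_le hε.2⟩)
      (disjoint_left.1 hdδ (self_subset_thickening hδ _ hx))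
  obtain ⟨δ, hδ, hδpos⟩ := ((eventually_all.2 hpair).and self_mem_nhdsWithin).exists
  exact ⟨δ, hδpos, fun i j => hδ (i, j)⟩

theorem card_le_coverNum_s18 {X ι : Type*} [Fintype ι] {K : Set X} {U : Set (Set X)}
    (hU : ∃ F : Finset (Set X), ↑F ⊆ U ∧ K ⊆ ⋃₀ ↑F) {p : ι → X} (hpK : ∀ i, p i ∈ K)
    (hp : ∀ u ∈ U, ∀ i j, p i ∈ u → p j ∈ u → i = j) :
    Fintype.card ι ≤ coverNum K U := by
  obtain ⟨F, hFU, hKF⟩ := hU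
  refine le_csInf ⟨F.card, F, hFU, rfl, hKF⟩ ?_
  rintro _ ⟨F, hFU, rfl, hKF⟩
  choose u hu hpu using fun i => mem_sUnion.1 (hKF (hpK i))
  rw [← Finset.card_univ]
  exact Finset.card_le_card_of_injOn u (fun i _ => hu i)
    fun i _ j _ hij => hp _ (hFU (hu i)) i j (hpu i) (hij ▸ hpu j)

theorem exists_finset_subset_gridCover {α : Finset (Set I)} (hα : ⋃₀ (α : Set (Set I)) = univ)
    (k : ℕ) (K : Set (Fin k → I)) :
    ∃ F : Finset (Set (Fin k → I)), ↑F ⊆ gridCover α k ∧ K ⊆ ⋃₀ ↑F := by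
  have hfin : (gridCover α k).Finite := by
    refine (finite_range fun f : Fin k → α => {x : Fin k → I | ∀ i, x i ∈ (f i : Set I)}).subset ?_
    rintro _ ⟨f, hf, rfl⟩
    exact ⟨fun i => ⟨f i, hf i⟩, rfl⟩
  refine ⟨hfin.toFinset, hfin.coe_toFinset.subset, fun x _ => ?_⟩
  have hxα : ∀ i, x i ∈ ⋃₀ (α : Set (Set I)) := fun i => hα ▸ mem_univ _
  choose u hu hxu using fun i => mem_sUnion.1 (hxα i)
  exact ⟨_, hfin.mem_toFinset.2 ⟨u, hu, rfl⟩, hxu⟩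

theorem dist_lt_of_mem_gridCover {α : Finset (Set I)} {ε : ℝ}
    (hα : ∀ u ∈ α, ∀ x ∈ u, ∀ y ∈ u, dist x y < ε) {k : ℕ} {s : Set (Fin k → I)}
    (hs : s ∈ gridCover α k) {x y : Fin k → I} (hx : x ∈ s) (hy : y ∈ s) (t : Fin k) :
    dist (x t) (y t) < ε := by
  obtain ⟨f, hf, rfl⟩ := hs
  exact hα _ (hf t) _ (hx t) _ (hy t)

def gridPoint (n : ℕ) (j : Fin (n + 1)) : I :=
  ⟨j / n, unitInterval.div_mem (Nat.cast_nonneg _) (Nat.cast_nonneg _) (by exact_mod_cast j.is_le)⟩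

def ballCover (n : ℕ) : Finset (Set I) :=
  Finset.univ.image fun j => ball (gridPoint n j) (1 / n)

theorem dist_gridPoint (n : ℕ) (i j : Fin (n + 1)) :
    dist (gridPoint n i) (gridPoint n j) = |(i : ℝ) - j| / n := by
  rw [Subtype.dist_eq, Real.dist_eq, gridPoint, gridPoint, ← sub_div, abs_div, Nat.abs_cast]

theorem exists_mem_ball_gridPoint {n : ℕ} (hn : 0 < n) (x : I) :
    ∃ j, x ∈ ball (gridPoint n j) (1 / n) := by
  have hnR : (0 : ℝ) < n := by exact_mod_cast hn
  have hnx : 0 ≤ (n : ℝ) * x := mul_nonneg hnR.le x.2.1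
  refine ⟨⟨⌊(n : ℝ) * x⌋₊, Nat.lt_succ_of_le (Nat.floor_le_of_le ?_)⟩, ?_⟩
  · simpa using mul_le_mul_of_nonneg_left x.2.2 hnR.le
  have h1 := Nat.floor_le hnx
  have h2 := Nat.lt_floor_add_one ((n : ℝ) * x)
  rw [mem_ball, Subtype.dist_eq, Real.dist_eq, gridPoint]
  rw [show (x : ℝ) - (⌊(n : ℝ) * x⌋₊ : ℝ) / n = ((n : ℝ) * x - ⌊(n : ℝ) * x⌋₊) / n by
    field_simp, abs_div, Nat.abs_cast, div_lt_div_iff_of_pos_right hnR, abs_lt]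
  constructor <;> linarith

theorem gridPoint_mem_ball_gridPoint_iff {n : ℕ} (hn : 0 < n) (i j : Fin (n + 1)) :
    gridPoint n i ∈ ball (gridPoint n j) (1 / n) ↔ i = j := by
  have hnR : (0 : ℝ) < n := by exact_mod_cast hn
  rw [mem_ball, dist_gridPoint, div_lt_div_iff_of_pos_right hnR, abs_lt]
  refine ⟨fun ⟨hlo, hhi⟩ => Fin.ext ?_, fun hij => by simp [hij]⟩
  have : (i : ℕ) < j + 1 := by exact_mod_cast (by linarith : (i : ℝ) < j + 1)
  have : (j : ℕ) < i + 1 := by exact_mod_cast (by linarith : (j : ℝ) < i + 1)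
  omega

theorem ordConnected_ball_unitInterval (x : I) (r : ℝ) : (ball x r).OrdConnected :=
  (Real.ball_eq_Ioo (x : ℝ) r ▸ ordConnected_Ioo).preimage_mono (Subtype.mono_coe _)

theorem isMinimalIntervalCover_ballCover {n : ℕ} (hn : 0 < n) :
    IsMinimalIntervalCover (ballCover n) := by
  refine ⟨?_, eq_univ_of_forall fun x => ?_, fun β hβ hcov => hβ.antisymm fun u hu => ?_⟩
  · rintro _ hu
    obtain ⟨j, -, rfl⟩ := Finset.mem_image.1 hu
    exact ⟨isOpen_ball, ordConnected_ball_unitInterval _ _⟩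
  · obtain ⟨j, hj⟩ := exists_mem_ball_gridPoint hn x
    exact ⟨_, Finset.mem_image_of_mem _ (Finset.mem_univ j), hj⟩
  · obtain ⟨j, -, rfl⟩ := Finset.mem_image.1 hu
    obtain ⟨v, hvβ, hjv⟩ := mem_sUnion.1 (hcov.symm ▸ mem_univ (gridPoint n j))
    obtain ⟨i, -, rfl⟩ := Finset.mem_image.1 (hβ hvβ)
    rwa [(gridPoint_mem_ball_gridPoint_iff hn j i).1 hjv]

theorem dist_lt_of_mem_ballCover {n : ℕ} {u : Set I} (hu : u ∈ ballCover n) {x y : I}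
    (hx : x ∈ u) (hy : y ∈ u) : dist x y < 2 / n := by
  obtain ⟨j, -, rfl⟩ := Finset.mem_image.1 hu
  calc dist x y ≤ dist x (gridPoint n j) + dist y (gridPoint n j) := dist_triangle_right _ _ _
    _ < 1 / n + 1 / n := add_lt_add hx hy
    _ = 2 / n := by ring

-- `MahavierInfN N H = {x | ∀ j, block N x j ∈ H}` holds by definition.
def block {α : Type*} (N : ℕ) (x : ℕ → α) (j : ℕ) : Fin (N + 1) → α :=
  fun i => x (j * N + i)

theorem exists_block_eq {α : Type*} {N : ℕ} (hN : 0 < N) (g : ℕ → Fin (N + 1) → α)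
    (hg : ∀ j, g (j + 1) 0 = g j (Fin.last N)) :
    ∃ x : ℕ → α, ∀ j, block N x j = g j := by
  refine ⟨fun t => g (t / N) ⟨t % N, (Nat.mod_lt t hN).trans N.lt_succ_self⟩,
    fun j => funext fun i => ?_⟩
  induction i using Fin.lastCases with
  | last =>
    have h : j * N + N = (j + 1) * N := by ring
    simp only [block, Fin.val_last, h, Nat.mul_div_cancel _ hN, Nat.mul_mod_left]
    exact hg j
  | cast i =>
    have hdiv : (j * N + i) / N = j := by
      rw [Nat.add_comm, Nat.add_mul_div_right _ _ hN, Nat.div_eq_of_lt i.2, zero_add]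
    have hmod : (j * N + i) % N = i := by
      rw [Nat.add_comm, Nat.add_mul_mod_self_right, Nat.mod_eq_of_lt i.2]
    simp only [block, Fin.val_castSucc, hdiv, hmod]
    rfl

theorem exists_forall_block_mem {α : Type*} [Nonempty α] {N : ℕ} (hN : 0 < N)
    {A : ℕ → Set (Fin (N + 1) → α)} (hA : ∀ j, (fun p => p 0) '' A j = univ) :
    ∃ x : ℕ → α, ∀ j, block N x j ∈ A j := by
  choose P hPA hP0 using fun j a => (hA j).symm ▸ mem_univ a
  let g : ℕ → Fin (N + 1) → α := fun j =>
    Nat.rec (P 0 (Classical.arbitrary α)) (fun j q => P (j + 1) (q (Fin.last N))) j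
  obtain ⟨x, hx⟩ := exists_block_eq hN g fun j => hP0 _ _
  refine ⟨x, fun j => (hx j).symm ▸ ?_⟩
  cases j <;> exact hPA _ _

theorem block_index_lt {m N j i : ℕ} (hj : j < m) (hi : i ≤ N) : j * N + i < m * N + 1 := by
  nlinarith

theorem pow_le_coverNum_mahavierFinN {N k : ℕ} (hN : 0 < N) (hk : 0 < k)
    {H : Set (Fin (N + 1) → I)} {Hs : Fin k → Set (Fin (N + 1) → I)} (hsub : ∀ i, Hs i ⊆ H)
    (hproj : ∀ i, (fun x => x 0) '' Hs i = univ) {δ : ℝ} (hδ : 0 < δ)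
    (hsep : ∀ i j, ∀ x ∈ Hs i, ∀ y ∈ Hs j, dist x y < δ → i = j) {α : Finset (Set I)}
    (hα : ⋃₀ (α : Set (Set I)) = univ) (hαδ : ∀ u ∈ α, ∀ x ∈ u, ∀ y ∈ u, dist x y < δ)
    (m : ℕ) : k ^ m ≤ coverNum (MahavierFinN N H m) (gridCover α (m * N + 1)) := by
  have hword : ∀ w : Fin m → Fin k, ∃ x : ℕ → I, ∀ j : Fin m, block N x j ∈ Hs (w j) := by
    intro w
    obtain ⟨x, hx⟩ := exists_forall_block_mem hN
      (A := fun j => Hs (if h : j < m then w ⟨j, h⟩ else ⟨0, hk⟩)) fun j => hproj _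
    exact ⟨x, fun j => by simpa [j.2] using hx j⟩
  choose x hx using hword
  let p : (Fin m → Fin k) → Fin (m * N + 1) → I := fun w t => x w t
  have hcell : ∀ u ∈ gridCover α (m * N + 1), ∀ w w', p w ∈ u → p w' ∈ u → w = w' :=
    fun u hu w w' hw hw' => funext fun j => hsep _ _ _ (hx w j) _ (hx w' j) <|
      (dist_pi_lt_iff hδ).2 fun i =>
        dist_lt_of_mem_gridCover hαδ hu hw hw' ⟨j * N + i, block_index_lt j.2 i.is_le⟩
  simpa using card_le_coverNum_s18 (exists_finset_subset_gridCover hα _ (MahavierFinN N H m))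
    (fun w j => hsub _ (hx w j)) hcell

theorem ofReal_log_le_entOfN {N : ℕ} {H : Set (Fin (N + 1) → I)} {α : Finset (Set I)}
    (hH : (MahavierInfN N H).Nonempty) {c : ℝ} (hc : 0 < c)
    (hcov : ∀ m, c ^ m ≤ coverNum (MahavierFinN N H m) (gridCover α (m * N + 1))) :
    ENNReal.ofReal (Real.log c) ≤ entOfN N H α := by
  rw [entOfN, if_pos hH]
  refine le_limsup_of_frequently_le' (Eventually.frequently ?_)
  filter_upwards [eventually_gt_atTop 0] with m hm
  refine ENNReal.ofReal_le_ofReal ?_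
  rw [le_div_iff₀ (by exact_mod_cast hm), mul_comm, ← Real.log_pow]
  exact Real.log_le_log (pow_pos hc m) (hcov m)

theorem entN_ge_log_of_disjoint_full_projections_general
    (N : ℕ) (hN : 1 ≤ N) (H : Set (Fin (N + 1) → unitInterval))
    (k : ℕ) (Hs : Fin k → Set (Fin (N + 1) → unitInterval))
    (hsub : ∀ i, Hs i ⊆ H) (hcl : ∀ i, IsClosed (Hs i))
    (hdisj : ∀ i j, i ≠ j → Disjoint (Hs i) (Hs j))
    (hproj : ∀ i, (fun x => x 0) '' Hs i = Set.univ) :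
    ENNReal.ofReal (Real.log k) ≤ entN N H := by
  rcases Nat.eq_zero_or_pos k with rfl | hk
  · simp
  obtain ⟨δ, hδ, hsep⟩ := exists_pos_forall_dist_lt_imp_eq (fun i => (hcl i).isCompact) hdisj
  obtain ⟨n, hn⟩ := exists_nat_gt (2 / δ)
  have hn0 : 0 < n := by exact_mod_cast (div_pos two_pos hδ).trans hn
  have hmesh : 2 / (n : ℝ) < δ := (div_lt_comm₀ (Nat.cast_pos.2 hn0) hδ).2 hn
  have hH : (MahavierInfN N H).Nonempty := by
    obtain ⟨x, hx⟩ := exists_forall_block_mem hN fun _ => hproj ⟨0, hk⟩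
    exact ⟨x, fun j => hsub _ (hx j)⟩
  calc ENNReal.ofReal (Real.log k)
      ≤ entOfN N H (ballCover n) := ofReal_log_le_entOfN hH (Nat.cast_pos.2 hk) fun m => by
        exact_mod_cast pow_le_coverNum_mahavierFinN hN hk hsub hproj hδ hsep
          (isMinimalIntervalCover_ballCover hn0).2.1
          (fun u hu x hx y hy => (dist_lt_of_mem_ballCover hu hx hy).trans hmesh) m
    _ ≤ entN N H := le_iSup (fun α : {α // IsMinimalIntervalCover α} => entOfN N H α.1)
        ⟨_, isMinimalIntervalCover_ballCover hn0⟩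

/-- If a closed `H ⊆ [0,1]^{N+1}` (`N ≥ 1`) contains `k` pairwise disjoint
closed sets each of which projects onto all of `[0,1]` in the first coordinate, then
`ent(H) ≥ log k`. -/
theorem entN_ge_log_of_disjoint_full_projections
    (N : ℕ) (hN : 1 ≤ N) (H : Set (Fin (N + 1) → unitInterval)) (hHcl : IsClosed H)
    (k : ℕ) (Hs : Fin k → Set (Fin (N + 1) → unitInterval))
    (hsub : ∀ i, Hs i ⊆ H) (hcl : ∀ i, IsClosed (Hs i))
    (hdisj : ∀ i j, i ≠ j → Disjoint (Hs i) (Hs j))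
    (hproj : ∀ i, (fun x => x 0) '' Hs i = Set.univ) :
    ENNReal.ofReal (Real.log k) ≤ entN N H :=
  entN_ge_log_of_disjoint_full_projections_general N hN H k Hs hsub hcl hdisj hproj
end
end

section
/- Let G⁺ = {(x,y) ∈ [0,1]² : y ≤ x} ∪ {(0,1)} and let 𝐆⁺ = ⋆_{i=1}^∞ G⁺ with the subspace topology from [0,1]^ℕ, invariant under the shift map σ. Then: (1) the periodic points of σ are dense in 𝐆⁺; (2) for every positive integer n, σ has a point of prime period n in 𝐆⁺ (i.e. a point z with σⁿ(z) = z but σʲ(z) ≠ z for 0 < j < n); and (3) σ restricted to 𝐆⁺ is topologically transitive: for every pair U, V of nonempty open subsets of 𝐆⁺ there is an n with σⁿ(U) ∩ V ≠ ∅. -/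
open Set Filter Topology unitInterval
open scoped Classical

noncomputable section

/-! Every point of `G⁺` may drop to `0`, the pair `(0, 1)` lies in `G⁺`, and from `1` one may
step to any point. Hence any initial segment of a point of `𝐆⁺` can be continued by `0, 1` and
then by an arbitrary point of `𝐆⁺`. Continuing a segment by itself, repeated, gives periodic
points close to any given point; continuing it by a point of `V` gives transitivity; and the
sequence `1, 0, …, 0` (with `n - 1` zeros) repeated has prime period `n`. -/

lemma shiftMap_iterate_apply (k : ℕ) (x : ℕ → I) (n : ℕ) :
    shiftMap^[k] x n = x (n + k) := by
  induction k generalizing x with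
  | zero => rfl
  | succ k ih =>
    rw [Function.iterate_succ_apply, ih]
    rfl

lemma IsOpen.exists_eqOn_Iic_imp_mem {X : Type*} [TopologicalSpace X] {U : Set (ℕ → X)}
    (hU : IsOpen U) {x : ℕ → X} (hx : x ∈ U) :
    ∃ N : ℕ, ∀ y : ℕ → X, EqOn y x (Iic N) → y ∈ U := by
  obtain ⟨s, u, hu, hsu⟩ := isOpen_pi_iff.mp hU x hx
  refine ⟨s.sup id, fun y hy => hsu fun i hi => ?_⟩
  rw [hy (show i ≤ s.sup id from Finset.le_sup (f := id) hi)]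
  exact (hu i hi).2

lemma const_mem_mahavierInf {G : Set (I × I)} {a : I} (ha : (a, a) ∈ G) :
    (fun _ => a) ∈ MahavierInf G :=
  fun _ => ha

/-- The sequence `x 0, …, x N, y 0, y 1, …`. -/
def seqAppend {α : Type*} (x : ℕ → α) (N : ℕ) (y : ℕ → α) : ℕ → α :=
  fun i => if i ≤ N then x i else y (i - (N + 1))

lemma seqAppend_eqOn {α : Type*} (x : ℕ → α) (N : ℕ) (y : ℕ → α) :
    EqOn (seqAppend x N y) x (Iic N) :=
  fun _ hi => if_pos hi

lemma shiftMap_iterate_seqAppend (x : ℕ → I) (N : ℕ) (y : ℕ → I) :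
    shiftMap^[N + 1] (seqAppend x N y) = y := by
  funext n
  simp only [shiftMap_iterate_apply, seqAppend]
  rw [if_neg (by omega), Nat.add_sub_cancel]

lemma seqAppend_mem_mahavierInf {G : Set (I × I)} {x y : ℕ → I} (hx : x ∈ MahavierInf G)
    (hy : y ∈ MahavierInf G) {N : ℕ} (hxy : (x N, y 0) ∈ G) :
    seqAppend x N y ∈ MahavierInf G := by
  intro i
  rcases lt_trichotomy i N with h | rfl | h
  · simpa [seqAppend, h.le, Nat.succ_le_of_lt h] using hx i
  · simpa [seqAppend] using hxy
  · have hi : i + 1 - (N + 1) = i - (N + 1) + 1 := by omega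
    simpa [seqAppend, h.not_ge, (h.trans (Nat.lt_succ_self i)).not_ge, hi] using hy (i - (N + 1))

def periodize {α : Type*} (w : ℕ → α) (n : ℕ) : ℕ → α :=
  fun i => w (i % n)

lemma periodize_eqOn {α : Type*} (w : ℕ → α) (n : ℕ) : EqOn (periodize w n) w (Iio n) :=
  fun _ hi => congrArg w (Nat.mod_eq_of_lt hi)

lemma shiftMap_iterate_periodize (w : ℕ → I) (n : ℕ) :
    shiftMap^[n] (periodize w n) = periodize w n := by
  funext i
  simp [shiftMap_iterate_apply, periodize]

lemma periodize_mem_mahavierInf {G : Set (I × I)} {w : ℕ → I} {n : ℕ} (hn : 0 < n)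
    (hw : w ∈ MahavierInf G) (hwn : w n = w 0) : periodize w n ∈ MahavierInf G := by
  intro i
  obtain ⟨q, r, hr, rfl⟩ : ∃ q r, r < n ∧ i = n * q + r :=
    ⟨i / n, i % n, Nat.mod_lt i hn, (Nat.div_add_mod i n).symm⟩
  have hper : ∀ k, periodize w n (n * q + k) = w (k % n) := fun k => by
    simp [periodize]
  have hwrap : w ((r + 1) % n) = w (r + 1) := by
    rcases (show r + 1 ≤ n from hr).lt_or_eq with h | h
    · rw [Nat.mod_eq_of_lt h]
    · rw [h, Nat.mod_self, hwn]
  rw [add_assoc, hper, hper, Nat.mod_eq_of_lt hr, hwrap]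
  exact hw r

structure HasZeroOneBridge (G : Set (I × I)) : Prop where
  to_zero : ∀ a, (a, 0) ∈ G
  zero_one : ((0 : I), (1 : I)) ∈ G
  from_one : ∀ b, (1, b) ∈ G

namespace HasZeroOneBridge

variable {G : Set (I × I)}

theorem exists_eqOn_iterate_eq (hG : HasZeroOneBridge G) {x y : ℕ → I}
    (hx : x ∈ MahavierInf G) (hy : y ∈ MahavierInf G) (N : ℕ) :
    ∃ w ∈ MahavierInf G, EqOn w x (Iic N) ∧ shiftMap^[N + 3] w = y := by
  have hone : seqAppend (fun _ => 1) 0 y ∈ MahavierInf G :=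
    seqAppend_mem_mahavierInf (const_mem_mahavierInf (hG.from_one 1)) hy (hG.from_one _)
  have hzero : seqAppend (fun _ => 0) 0 (seqAppend (fun _ => 1) 0 y) ∈ MahavierInf G :=
    seqAppend_mem_mahavierInf (const_mem_mahavierInf (hG.to_zero 0)) hone hG.zero_one
  refine ⟨_, seqAppend_mem_mahavierInf hx hzero (hG.to_zero _), seqAppend_eqOn _ _ _, ?_⟩
  rw [show N + 3 = 1 + 1 + (N + 1) by omega, Function.iterate_add_apply,
    shiftMap_iterate_seqAppend, Function.iterate_add_apply]
  exact (congrArg _ (shiftMap_iterate_seqAppend _ 0 _)).trans (shiftMap_iterate_seqAppend _ 0 _)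

theorem mem_closure_periodicPts (hG : HasZeroOneBridge G) {x : ℕ → I}
    (hx : x ∈ MahavierInf G) :
    x ∈ closure {z | z ∈ MahavierInf G ∧ ∃ n : ℕ, 1 ≤ n ∧ shiftMap^[n] z = z} := by
  refine mem_closure_iff.mpr fun o ho hxo => ?_
  obtain ⟨N, hN⟩ := ho.exists_eqOn_Iic_imp_mem hxo
  obtain ⟨w, hw, hwx, hw_shift⟩ := hG.exists_eqOn_iterate_eq hx hx N
  have hwrap : w (N + 3) = w 0 := by
    have h0 := congrFun hw_shift 0
    rw [shiftMap_iterate_apply, zero_add] at h0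
    rw [h0, hwx (mem_Iic.mpr (Nat.zero_le N))]
  refine ⟨periodize w (N + 3), hN _ fun i hi => ?_,
    periodize_mem_mahavierInf (by omega) hw hwrap, N + 3, by omega,
    shiftMap_iterate_periodize w _⟩
  exact (periodize_eqOn w _ (show i < N + 3 by rw [mem_Iic] at hi; omega)).trans (hwx hi)

theorem exists_minimal_period (hG : HasZeroOneBridge G) (n : ℕ) :
    ∃ z ∈ MahavierInf G, shiftMap^[n] z = z ∧ ∀ j : ℕ, 0 < j → j < n → shiftMap^[j] z ≠ z := by
  let z : ℕ → I := fun i => if n ∣ i then 1 else 0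
  refine ⟨z, fun i => ?_, ?_, fun j hj hjn hz => ?_⟩
  · show (ite _ _ _, ite _ _ _) ∈ G
    split_ifs
    all_goals first | exact hG.from_one _ | exact hG.zero_one | exact hG.to_zero _
  · funext i
    simp [z, shiftMap_iterate_apply]
  · have h0 := congrFun hz 0
    simp [z, shiftMap_iterate_apply, Nat.not_dvd_of_pos_of_lt hj hjn] at h0

theorem exists_iterate_image_inter_nonempty (hG : HasZeroOneBridge G) {U V : Set (ℕ → I)}
    (hU : IsOpen U) (hUG : (U ∩ MahavierInf G).Nonempty) (hVG : (V ∩ MahavierInf G).Nonempty) :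
    ∃ n : ℕ, (shiftMap^[n] '' (U ∩ MahavierInf G) ∩ (V ∩ MahavierInf G)).Nonempty := by
  obtain ⟨x, hxU, hx⟩ := hUG
  obtain ⟨y, hyV⟩ := hVG
  obtain ⟨N, hN⟩ := hU.exists_eqOn_Iic_imp_mem hxU
  obtain ⟨w, hw, hwx, hw_shift⟩ := hG.exists_eqOn_iterate_eq hx hyV.2 N
  exact ⟨N + 3, y, ⟨w, ⟨hN w hwx, hw⟩, hw_shift⟩, hyV⟩

end HasZeroOneBridge

lemma hasZeroOneBridge_Gplus :
    HasZeroOneBridge ({z : I × I | z.2 ≤ z.1} ∪ {((0 : I), (1 : I))}) :=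
  ⟨fun _ => Or.inl unitInterval.nonneg', Or.inr rfl, fun _ => Or.inl unitInterval.le_one'⟩

/-- For `G⁺ = {(x,y) ∈ [0,1]² : y ≤ x} ∪ {(0,1)}` and
`𝐆⁺ = ⋆_{i=1}^∞ G⁺`, the shift map on `𝐆⁺` has (1) a dense set of periodic points,
(2) points of prime period `n` for every `n ≥ 1`, and (3) is topologically transitive
on `𝐆⁺`. -/
theorem shift_on_Gplus_dense_periodic_all_periods_transitive :
    (∀ x ∈ MahavierInf
        ({z : unitInterval × unitInterval | z.2 ≤ z.1} ∪
          {((0 : unitInterval), (1 : unitInterval))}),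
      x ∈ closure {z | z ∈ MahavierInf
          ({z : unitInterval × unitInterval | z.2 ≤ z.1} ∪
            {((0 : unitInterval), (1 : unitInterval))}) ∧
        ∃ n : ℕ, 1 ≤ n ∧ shiftMap^[n] z = z}) ∧
    (∀ n : ℕ, 1 ≤ n → ∃ z ∈ MahavierInf
        ({z : unitInterval × unitInterval | z.2 ≤ z.1} ∪
          {((0 : unitInterval), (1 : unitInterval))}),
      shiftMap^[n] z = z ∧ ∀ j : ℕ, 0 < j → j < n → shiftMap^[j] z ≠ z) ∧
    (∀ U V : Set (ℕ → unitInterval), IsOpen U → IsOpen V →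
      (U ∩ MahavierInf
        ({z : unitInterval × unitInterval | z.2 ≤ z.1} ∪
          {((0 : unitInterval), (1 : unitInterval))})).Nonempty →
      (V ∩ MahavierInf
        ({z : unitInterval × unitInterval | z.2 ≤ z.1} ∪
          {((0 : unitInterval), (1 : unitInterval))})).Nonempty →
      ∃ n : ℕ, (shiftMap^[n] '' (U ∩ MahavierInf
          ({z : unitInterval × unitInterval | z.2 ≤ z.1} ∪
            {((0 : unitInterval), (1 : unitInterval))})) ∩
        (V ∩ MahavierInf
          ({z : unitInterval × unitInterval | z.2 ≤ z.1} ∪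
            {((0 : unitInterval), (1 : unitInterval))}))).Nonempty) := by
  have hG := hasZeroOneBridge_Gplus
  exact ⟨fun _ hx => hG.mem_closure_periodicPts hx, fun n _ => hG.exists_minimal_period n,
    fun _ _ hU _ hUG hVG => hG.exists_iterate_image_inter_nonempty hU hUG hVG⟩
end
end
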